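/- arXiv:1611.02838 — 2 statements merged into one kernel-verified Lean document; each statement's English description precedes it below -/
import Mathlib

section
/- Let p, q be natural numbers with p > q ≥ 1. Then for every natural number n ≥ 1, C(pn, qn)^{1/(qn)} < (p/q)·(p/(p−q))^{(p−q)/q}; equivalently, C(pn, qn) < (p/q)^{qn}·(p/(p−q))^{(p−q)n}. -/
/-!
Write `p = q + (p - q)` and expand `p ^ (pn) = (q + (p - q)) ^ (pn)` by the binomial theorem.
The term of index `qn` is `C(pn, qn) q ^ (qn) (p - q) ^ ((p - q) n)`, and the term of index `0`
is positive, so this single term is strictly smaller than the whole sum; dividing by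
`q ^ (qn) (p - q) ^ ((p - q) n)` gives the second inequality, and taking `qn`-th roots the first.
-/

open Finset Real

theorem choose_mul_pow_mul_pow_lt_add_pow {R : Type*} [CommSemiring R] [PartialOrder R]
    [IsStrictOrderedRing R] {a b : R} (ha : 0 ≤ a) (hb : 0 < b) {m k : ℕ} (hk : k ≠ 0)
    (hkm : k ≤ m) : a ^ k * b ^ (m - k) * m.choose k < (a + b) ^ m := by
  rw [add_pow]
  refine single_lt_sum (f := fun j => a ^ j * b ^ (m - j) * m.choose j) hk.symm
    (mem_range.2 (Nat.lt_succ_of_le hkm)) (mem_range.2 m.succ_pos) ?_ fun j _ _ => by positivity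
  simpa using pow_pos hb m

theorem choose_lt_div_pow_mul_div_pow {a b : ℝ} (ha : 0 < a) (hb : 0 < b) {m k : ℕ}
    (hk : k ≠ 0) (hkm : k ≤ m) :
    (m.choose k : ℝ) < ((a + b) / a) ^ k * ((a + b) / b) ^ (m - k) := by
  rw [div_pow, div_pow, div_mul_div_comm, ← pow_add, Nat.add_sub_cancel' hkm,
    lt_div_iff₀ (by positivity)]
  linarith [choose_mul_pow_mul_pow_lt_add_pow ha.le hb hk hkm]

theorem mul_rpow_div_rpow_mul {x y : ℝ} (hx : 0 ≤ x) (hy : 0 ≤ y) {s t : ℝ} (ht : t ≠ 0)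
    (u : ℝ) : (x * y ^ (s / t)) ^ (t * u) = x ^ (t * u) * y ^ (s * u) := by
  rw [mul_rpow hx (rpow_nonneg hy _), ← rpow_mul hy, ← mul_assoc, div_mul_cancel₀ s ht]

/-- **Lemma (binomial coefficient estimate).** Let `p > q ≥ 1` be natural numbers.  Then
for every natural number `n ≥ 1`,
`C(pn, qn)^{1/(qn)} < (p/q)·(p/(p−q))^{(p−q)/q}`; equivalently,
`C(pn, qn) < (p/q)^{qn}·(p/(p−q))^{(p−q)n}`. -/
theorem statement9 (p q n : ℕ) (hq : 1 ≤ q) (hpq : q < p) (hn : 1 ≤ n) :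
    ((Nat.choose (p * n) (q * n) : ℝ)) ^ ((1 : ℝ) / ((q : ℝ) * (n : ℝ))) <
      ((p : ℝ) / (q : ℝ)) * (((p : ℝ) / ((p : ℝ) - (q : ℝ))) ^ (((p : ℝ) - (q : ℝ)) / (q : ℝ))) ∧
    (Nat.choose (p * n) (q * n) : ℝ) <
      ((p : ℝ) / (q : ℝ)) ^ (q * n) * ((p : ℝ) / ((p : ℝ) - (q : ℝ))) ^ ((p - q) * n) := by
  have hqR : (0 : ℝ) < q := by exact_mod_cast hq
  have hpqR : (0 : ℝ) < p - q := sub_pos.2 (by exact_mod_cast hpq)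
  have hbound : (Nat.choose (p * n) (q * n) : ℝ) <
      ((p : ℝ) / q) ^ (q * n) * ((p : ℝ) / (p - q)) ^ ((p - q) * n) := by
    have h := choose_lt_div_pow_mul_div_pow hqR hpqR (Nat.mul_ne_zero (by omega) (by omega))
      (Nat.mul_le_mul_right n hpq.le)
    rwa [add_sub_cancel, ← Nat.sub_mul] at h
  refine ⟨?_, hbound⟩
  rw [one_div, rpow_inv_lt_iff_of_pos (by positivity) (by positivity) (by positivity),
    mul_rpow_div_rpow_mul (by positivity) (by positivity) hqR.ne']
  have hcast : ((p : ℝ) - q) * n = ((p - q) * n : ℕ) := by push_cast [Nat.cast_sub hpq.le]; ring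
  rwa [hcast, ← Nat.cast_mul, rpow_natCast, rpow_natCast]
end

section
/- For all positive integers n, m, k₁, k₂, the dual cone of the cone of sums of squares biforms with respect to the apolar inner product is contained in the cone of sums of squares biforms: {f ∈ ℝ[x,y]_{2k₁,2k₂} : ⟨f, g⟩_d ≥ 0 for all g ∈ Sq^{(n,m)}_{(2k₁,2k₂)}} ⊆ Sq^{(n,m)}_{(2k₁,2k₂)}. -/
open MeasureTheory MvPolynomial

noncomputable section

namespace BiformPaper

/-- The weight function on the variables: the `x`-variables get weight `(1,0)` and the
`y`-variables get weight `(0,1)`. -/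
def bw (n m : ℕ) : Fin n ⊕ Fin m → ℕ × ℕ := Sum.elim (fun _ => (1, 0)) (fun _ => (0, 1))

/-- The set of biforms of bidegree `(k₁, k₂)`: real polynomials in
`x = (x₁, …, xₙ)` and `y = (y₁, …, y_m)`, homogeneous of degree `k₁` in `x` and of degree
`k₂` in `y`. -/
def Biform (n m k₁ k₂ : ℕ) : Set (MvPolynomial (Fin n ⊕ Fin m) ℝ) :=
  {f | MvPolynomial.IsWeightedHomogeneous (bw n m) f (k₁, k₂)}

/-- Evaluation of a polynomial at a point `(x, y) ∈ ℝⁿ × ℝᵐ`. -/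
def beval {n m : ℕ} (f : MvPolynomial (Fin n ⊕ Fin m) ℝ) (x : Fin n → ℝ) (y : Fin m → ℝ) : ℝ :=
  eval (Sum.elim x y) f

/-- The Euclidean unit sphere `S^{n-1}` in `ℝⁿ`. -/
def unitSphere (n : ℕ) : Set (Fin n → ℝ) := {x | ∑ i, x i ^ 2 = 1}

/-- `σ` is the normalized uniform measure on the unit sphere `S^{n-1} ⊆ ℝⁿ`, i.e., the
unique rotation-invariant Borel probability measure concentrated on the sphere. -/
structure IsSphereMeasure (n : ℕ) (σ : Measure (Fin n → ℝ)) : Prop where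
  prob : IsProbabilityMeasure σ
  onSphere : σ (unitSphere n)ᶜ = 0
  invariant : ∀ Q : Matrix (Fin n) (Fin n) ℝ, Q * Q.transpose = 1 → σ.map Q.mulVec = σ

/-- The average `∫_T f dσ` of `f` over `T = S^{n-1} × S^{m-1}` (with `σ` the product of the
normalized sphere measures `σ₁`, `σ₂`). -/
def bavg {n m : ℕ} (σ₁ : Measure (Fin n → ℝ)) (σ₂ : Measure (Fin m → ℝ))
    (f : MvPolynomial (Fin n ⊕ Fin m) ℝ) : ℝ :=
  ∫ x, ∫ y, beval f x y ∂σ₂ ∂σ₁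

/-- The `L²(σ)` inner product `⟨f, g⟩ = ∫_T f·g dσ` on biforms. -/
def bip {n m : ℕ} (σ₁ : Measure (Fin n → ℝ)) (σ₂ : Measure (Fin m → ℝ))
    (f g : MvPolynomial (Fin n ⊕ Fin m) ℝ) : ℝ :=
  ∫ x, ∫ y, beval f x y * beval g x y ∂σ₂ ∂σ₁

/-- The cone `Pos^{(n,m)}_{(2k₁,2k₂)}` of nonnegative biforms of bidegree `(2k₁, 2k₂)`. -/
def PosSet (n m k₁ k₂ : ℕ) : Set (MvPolynomial (Fin n ⊕ Fin m) ℝ) :=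
  {f | f ∈ Biform n m (2 * k₁) (2 * k₂) ∧ ∀ x y, 0 ≤ beval f x y}

/-- The cone `Sq^{(n,m)}_{(2k₁,2k₂)}` of finite sums of squares of biforms of bidegree
`(k₁, k₂)`. -/
def SqSet (n m k₁ k₂ : ℕ) : Set (MvPolynomial (Fin n ⊕ Fin m) ℝ) :=
  {f | ∃ (N : ℕ) (g : Fin N → MvPolynomial (Fin n ⊕ Fin m) ℝ),
      (∀ i, g i ∈ Biform n m k₁ k₂) ∧ f = ∑ i, g i ^ 2}

/-- The cone `Lf^{(n,m)}_{(2k₁,2k₂)}` of finite sums of products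
`ℓᵢ(x)^{2k₁} · ℓ′ᵢ(y)^{2k₂}` of even powers of linear forms. -/
def LfSet (n m k₁ k₂ : ℕ) : Set (MvPolynomial (Fin n ⊕ Fin m) ℝ) :=
  {f | ∃ (N : ℕ) (a : Fin N → Fin n → ℝ) (b : Fin N → Fin m → ℝ),
      f = ∑ r, (∑ i, C (a r i) * X (Sum.inl i)) ^ (2 * k₁) *
               (∑ j, C (b r j) * X (Sum.inr j)) ^ (2 * k₂)}

/-- The biform `q = (x₁² + ⋯ + xₙ²)^{k₁} · (y₁² + ⋯ + y_m²)^{k₂}`. -/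
def qpoly (n m k₁ k₂ : ℕ) : MvPolynomial (Fin n ⊕ Fin m) ℝ :=
  (∑ i : Fin n, X (Sum.inl i) ^ 2) ^ k₁ * (∑ j : Fin m, X (Sum.inr j) ^ 2) ^ k₂

/-- The hyperplane `𝓜` of biforms of bidegree `(2k₁, 2k₂)` with average `0` on `T`. -/
def MSet (n m k₁ k₂ : ℕ) (σ₁ : Measure (Fin n → ℝ)) (σ₂ : Measure (Fin m → ℝ)) :
    Set (MvPolynomial (Fin n ⊕ Fin m) ℝ) :=
  {f | f ∈ Biform n m (2 * k₁) (2 * k₂) ∧ bavg σ₁ σ₂ f = 0}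

/-- The translated section `K̃ = {f ∈ 𝓜 : f + q ∈ K}` of a cone `K`. -/
def tilde (n m k₁ k₂ : ℕ) (σ₁ : Measure (Fin n → ℝ)) (σ₂ : Measure (Fin m → ℝ))
    (K : Set (MvPolynomial (Fin n ⊕ Fin m) ℝ)) : Set (MvPolynomial (Fin n ⊕ Fin m) ℝ) :=
  {f | f ∈ MSet n m k₁ k₂ σ₁ σ₂ ∧ f + qpoly n m k₁ k₂ ∈ K}

/-- The unit ball `B_𝓜` of `𝓜` in the `L²(σ)` norm. -/
def bball (n m k₁ k₂ : ℕ) (σ₁ : Measure (Fin n → ℝ)) (σ₂ : Measure (Fin m → ℝ)) :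
    Set (MvPolynomial (Fin n ⊕ Fin m) ℝ) :=
  {f | f ∈ MSet n m k₁ k₂ σ₁ σ₂ ∧ bip σ₁ σ₂ f f ≤ 1}

/-- `ψ : ℝ^D → Mset` is a unitary isomorphism: an injective linear map with range `Mset`
carrying the standard inner product of `ℝ^D` to the `L²(σ)` inner product.  Volumes of
Borel subsets `E` of `Mset` are computed as the Lebesgue measure of `ψ ⁻¹' E`
(by Lemma 1.1 of the paper this does not depend on the choice of `ψ`). -/
structure IsUnitaryParam (n m D : ℕ) (σ₁ : Measure (Fin n → ℝ)) (σ₂ : Measure (Fin m → ℝ))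
    (Mset : Set (MvPolynomial (Fin n ⊕ Fin m) ℝ))
    (ψ : (Fin D → ℝ) →ₗ[ℝ] MvPolynomial (Fin n ⊕ Fin m) ℝ) : Prop where
  inj : Function.Injective ψ
  range : Set.range ψ = Mset
  ip : ∀ a b : Fin D → ℝ, bip σ₁ σ₂ (ψ a) (ψ b) = ∑ i, a i * b i

/-- The apolar inner product `⟨r, s⟩_d = D_r(s)` on biforms, where `D_r` is the
differential operator obtained from `r` by replacing each variable by the corresponding
partial derivative; its value on a pair of forms of the same bidegree is
`∑_α r_α · s_α · α!`. -/
def apolar {n m : ℕ} (r s : MvPolynomial (Fin n ⊕ Fin m) ℝ) : ℝ :=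
  ∑ α ∈ r.support, coeff α r * coeff α s * α.prod fun _ k => (k.factorial : ℝ)

end BiformPaper

/-!
If `f` lies in the apolar dual of `Sq`, then `⟨f, (∑ v_α x^α / α!)²⟩_d ≥ 0` for every coefficient
vector `v` on the exponents of bidegree `(k₁, k₂)`; this says exactly that the matrix
`M_{αβ} = f_{α+β} · binom(α+β, α)` is positive semidefinite. A Vandermonde identity shows that its
Gram polynomial `∑_{α,β} M_{αβ} x^{α+β}` is `binom(2k₁, k₁) binom(2k₂, k₂) · f`, and factoring
`M = Bᵀ B` writes this polynomial as a sum of squares of biforms of bidegree `(k₁, k₂)`.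
-/

open MvPolynomial Finset Matrix

theorem Finset.sum_finsuppAntidiag_prod_choose {ι : Type*} [DecidableEq ι] (s : Finset ι)
    (γ : ι → ℕ) (k : ℕ) :
    ∑ a ∈ s.finsuppAntidiag k, ∏ i ∈ s, (γ i).choose (a i) = (∑ i ∈ s, γ i).choose k := by
  have h := PowerSeries.coeff_prod
    (fun i => ((1 + Polynomial.X : Polynomial ℕ) : PowerSeries ℕ) ^ γ i) k s
  rw [prod_pow_eq_pow_sum, ← Polynomial.coe_pow, Polynomial.coeff_coe,
    Polynomial.coeff_one_add_X_pow] at h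
  simpa only [← Polynomial.coe_pow, Polynomial.coeff_coe, Polynomial.coeff_one_add_X_pow,
    Nat.cast_id] using h.symm

namespace BiformPaper

section GramMatrix

variable {σ R : Type*} [CommSemiring R] (S : Finset (σ →₀ ℕ))

def sumMonomials (v : S → R) : MvPolynomial σ R :=
  ∑ α : S, monomial (α : σ →₀ ℕ) (v α)

def gramPoly (G : Matrix S S R) : MvPolynomial σ R :=
  ∑ α : S, ∑ β : S, monomial (α + β : σ →₀ ℕ) (G α β)

theorem sumMonomials_mul_sumMonomials (v w : S → R) :
    sumMonomials S v * sumMonomials S w =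
      ∑ α : S, ∑ β : S, monomial (α + β : σ →₀ ℕ) (v α * w β) := by
  simp only [sumMonomials, sum_mul_sum, monomial_mul]

theorem gramPoly_transpose_mul {κ : Type*} [Fintype κ] (B : Matrix κ S R) :
    gramPoly S (Bᵀ * B) = ∑ e, sumMonomials S (B e) ^ 2 := by
  simp only [gramPoly, sq, sumMonomials_mul_sumMonomials, mul_apply, transpose_apply,
    map_sum]
  exact (sum_congr rfl fun _ _ => sum_comm).trans sum_comm

theorem gramPoly_smul (r : R) (G : Matrix S S R) : gramPoly S (r • G) = r • gramPoly S G := by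
  simp only [gramPoly, smul_sum, smul_monomial, Matrix.smul_apply]

theorem coeff_gramPoly [DecidableEq σ] (G : Matrix S S R) (γ : σ →₀ ℕ) :
    coeff γ (gramPoly S G) = ∑ α : S, ∑ β : S, if (α + β : σ →₀ ℕ) = γ then G α β else 0 := by
  simp only [gramPoly, coeff_sum, coeff_monomial]

theorem isWeightedHomogeneous_sumMonomials {M : Type*} [AddCommMonoid M] {w : σ → M} {d : M}
    (hS : ∀ α ∈ S, Finsupp.weight w α = d) (v : S → R) :
    IsWeightedHomogeneous w (sumMonomials S v) d :=
  IsWeightedHomogeneous.sum _ _ _ fun α _ => isWeightedHomogeneous_monomial _ _ _ (hS α α.2)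

open scoped MatrixOrder in
theorem exists_gramPoly_eq_sum_sq {G : Matrix S S ℝ} (hG : G.PosSemidef) :
    ∃ B : Matrix S S ℝ, gramPoly S G = ∑ e, sumMonomials S (B e) ^ 2 := by
  classical
  obtain ⟨B, rfl⟩ := CStarAlgebra.nonneg_iff_eq_star_mul_self.mp hG.nonneg
  exact ⟨B, gramPoly_transpose_mul S B⟩

end GramMatrix

section Apolar

def multiBinomial {ι : Type*} [Fintype ι] (γ α : ι →₀ ℕ) : ℕ := ∏ i, (γ i).choose (α i)

theorem multiBinomial_add_symm {ι : Type*} [Fintype ι] (α β : ι →₀ ℕ) :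
    multiBinomial (α + β) α = multiBinomial (α + β) β :=
  prod_congr rfl fun _ _ => Nat.choose_symm_add

theorem multiBinomial_eq_zero_of_not_le {ι : Type*} [Fintype ι] {γ α : ι →₀ ℕ} (h : ¬α ≤ γ) :
    multiBinomial γ α = 0 := by
  obtain ⟨i, hi⟩ := not_forall.mp (mt Finsupp.le_def.mpr h)
  exact prod_eq_zero (mem_univ i) (Nat.choose_eq_zero_of_lt (not_le.mp hi))

theorem prod_factorial_add {ι : Type*} [Fintype ι] (α β : ι →₀ ℕ) :
    ((α + β).prod fun _ k => k.factorial) =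
      multiBinomial (α + β) α * (α.prod fun _ k => k.factorial) *
        β.prod fun _ k => k.factorial := by
  simp only [Finsupp.prod_fintype _ _ (fun _ => Nat.factorial_zero), multiBinomial,
    ← prod_mul_distrib, Finsupp.add_apply]
  exact prod_congr rfl fun _ _ => by
    rw [Nat.choose_symm_add, Nat.add_choose_mul_factorial_mul_factorial]

variable {n m : ℕ}

theorem apolar_sum {κ : Type*} (f : MvPolynomial (Fin n ⊕ Fin m) ℝ) (t : Finset κ)
    (g : κ → MvPolynomial (Fin n ⊕ Fin m) ℝ) :
    apolar f (∑ i ∈ t, g i) = ∑ i ∈ t, apolar f (g i) := by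
  simp only [apolar, coeff_sum, mul_sum, sum_mul]
  exact sum_comm

theorem apolar_monomial (f : MvPolynomial (Fin n ⊕ Fin m) ℝ) (δ : Fin n ⊕ Fin m →₀ ℕ) (t : ℝ) :
    apolar f (monomial δ t) = coeff δ f * t * (δ.prod fun _ k => k.factorial : ℕ) := by
  classical
  rw [apolar, sum_eq_single δ, coeff_monomial, if_pos rfl, Nat.cast_finsuppProd]
  · intro γ _ hγ
    rw [coeff_monomial, if_neg (Ne.symm hγ), mul_zero, zero_mul]
  · intro hδ
    rw [notMem_support_iff.mp hδ, zero_mul, zero_mul]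

theorem apolar_sumMonomials_sq (f : MvPolynomial (Fin n ⊕ Fin m) ℝ)
    (S : Finset (Fin n ⊕ Fin m →₀ ℕ)) (v : S → ℝ) :
    apolar f (sumMonomials S v ^ 2) = ∑ α : S, ∑ β : S, coeff (α + β : Fin n ⊕ Fin m →₀ ℕ) f *
      (v α * v β) * ((α + β : Fin n ⊕ Fin m →₀ ℕ).prod fun _ k => k.factorial : ℕ) := by
  simp only [sq, sumMonomials_mul_sumMonomials, apolar_sum, apolar_monomial]

def binomialGram {σ : Type*} [Fintype σ] (f : MvPolynomial σ ℝ) (S : Finset (σ →₀ ℕ)) :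
    Matrix S S ℝ :=
  fun α β => coeff (α + β : σ →₀ ℕ) f * multiBinomial (α + β : σ →₀ ℕ) α

theorem dotProduct_binomialGram_mulVec (f : MvPolynomial (Fin n ⊕ Fin m) ℝ)
    (S : Finset (Fin n ⊕ Fin m →₀ ℕ)) (v : S → ℝ) :
    v ⬝ᵥ binomialGram f S *ᵥ v = apolar f (sumMonomials S
      (fun α => v α / ((α : Fin n ⊕ Fin m →₀ ℕ).prod fun _ k => k.factorial : ℕ)) ^ 2) := by
  simp only [apolar_sumMonomials_sq, dotProduct, mulVec, mul_sum, binomialGram]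
  refine sum_congr rfl fun α _ => sum_congr rfl fun β _ => ?_
  have hα : ((α : Fin n ⊕ Fin m →₀ ℕ).prod fun _ k => k.factorial : ℕ) ≠ (0 : ℝ) :=
    (Nat.cast_pos.mpr (prod_pos fun _ _ => Nat.factorial_pos _)).ne'
  have hβ : ((β : Fin n ⊕ Fin m →₀ ℕ).prod fun _ k => k.factorial : ℕ) ≠ (0 : ℝ) :=
    (Nat.cast_pos.mpr (prod_pos fun _ _ => Nat.factorial_pos _)).ne'
  rw [prod_factorial_add, Nat.cast_mul, Nat.cast_mul]
  field_simp

theorem posSemidef_binomialGram (f : MvPolynomial (Fin n ⊕ Fin m) ℝ)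
    (S : Finset (Fin n ⊕ Fin m →₀ ℕ)) (hf : ∀ v : S → ℝ, 0 ≤ apolar f (sumMonomials S v ^ 2)) :
    (binomialGram f S).PosSemidef := by
  refine posSemidef_iff_dotProduct_mulVec.mpr ⟨?_, fun v => ?_⟩
  · ext α β
    simp only [conjTranspose_apply, star_trivial, binomialGram, add_comm (β : Fin n ⊕ Fin m →₀ ℕ)]
    rw [multiBinomial_add_symm]
  · simpa only [star_trivial, dotProduct_binomialGram_mulVec] using hf _

end Apolar

section Bidegree

variable (n m : ℕ)

theorem weight_bw (δ : Fin n ⊕ Fin m →₀ ℕ) :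
    Finsupp.weight (bw n m) δ = (∑ i, δ (Sum.inl i), ∑ j, δ (Sum.inr j)) := by
  rw [Finsupp.weight_apply, Finsupp.sum_fintype _ _ (fun _ => by simp), Fintype.sum_sum_type]
  ext <;> simp [Prod.fst_sum, Prod.snd_sum, bw]

def bidegreeExponents (k₁ k₂ : ℕ) : Finset (Fin n ⊕ Fin m →₀ ℕ) :=
  (univ.finsuppAntidiag k₁ ×ˢ univ.finsuppAntidiag k₂).map
    Finsupp.sumFinsuppEquivProdFinsupp.symm.toEmbedding

variable {n m}

theorem mem_bidegreeExponents {k₁ k₂ : ℕ} {α : Fin n ⊕ Fin m →₀ ℕ} :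
    α ∈ bidegreeExponents n m k₁ k₂ ↔ Finsupp.weight (bw n m) α = (k₁, k₂) := by
  simp only [bidegreeExponents, mem_map_equiv, mem_product, mem_finsuppAntidiag, weight_bw,
    Prod.mk.injEq, subset_univ, and_true]
  rfl

theorem sumMonomials_mem_biform {k₁ k₂ : ℕ} (v : bidegreeExponents n m k₁ k₂ → ℝ) :
    sumMonomials _ v ∈ Biform n m k₁ k₂ :=
  isWeightedHomogeneous_sumMonomials _ (fun _ hα => mem_bidegreeExponents.mp hα) v

theorem sum_multiBinomial_bidegreeExponents {k₁ k₂ d₁ d₂ : ℕ} {γ : Fin n ⊕ Fin m →₀ ℕ}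
    (hγ : Finsupp.weight (bw n m) γ = (d₁, d₂)) :
    ∑ α ∈ bidegreeExponents n m k₁ k₂, multiBinomial γ α = d₁.choose k₁ * d₂.choose k₂ := by
  rw [weight_bw, Prod.mk.injEq] at hγ
  rw [bidegreeExponents, sum_map, ← hγ.1, ← hγ.2,
    ← sum_finsuppAntidiag_prod_choose, ← sum_finsuppAntidiag_prod_choose, sum_mul_sum,
    ← sum_product']
  refine sum_congr rfl fun p _ => ?_
  simp [multiBinomial, Fintype.prod_sum_type]

theorem sum_sum_ite_add_eq_multiBinomial {k₁ k₂ : ℕ} {γ : Fin n ⊕ Fin m →₀ ℕ}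
    (hγ : Finsupp.weight (bw n m) γ = (2 * k₁, 2 * k₂)) :
    ∑ α : bidegreeExponents n m k₁ k₂, ∑ β : bidegreeExponents n m k₁ k₂,
        (if (α + β : Fin n ⊕ Fin m →₀ ℕ) = γ then (multiBinomial γ α : ℝ) else 0) =
      (2 * k₁).choose k₁ * (2 * k₂).choose k₂ := by
  have hinner : ∀ α : bidegreeExponents n m k₁ k₂, ∑ β : bidegreeExponents n m k₁ k₂,
      (if (α + β : Fin n ⊕ Fin m →₀ ℕ) = γ then (multiBinomial γ α : ℝ) else 0) =
        multiBinomial γ α := by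
    intro α
    by_cases hle : (α : Fin n ⊕ Fin m →₀ ℕ) ≤ γ
    · have hcompl : γ - α ∈ bidegreeExponents n m k₁ k₂ := by
        have hw := congrArg (Finsupp.weight (bw n m)) (add_tsub_cancel_of_le hle)
        rw [map_add, mem_bidegreeExponents.mp α.2, hγ, Prod.ext_iff] at hw
        simp only [Prod.fst_add, Prod.snd_add] at hw
        exact mem_bidegreeExponents.mpr (Prod.ext (by omega) (by omega))
      rw [sum_eq_single ⟨γ - α, hcompl⟩, if_pos (add_tsub_cancel_of_le hle)]
      · intro β _ hβ
        refine if_neg fun h => hβ (Subtype.ext ?_)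
        exact eq_tsub_of_add_eq (by rw [add_comm, h])
      · simp
    · simp [multiBinomial_eq_zero_of_not_le hle]
  rw [sum_congr rfl fun α _ => hinner α, sum_coe_sort _ (fun α => (multiBinomial γ α : ℝ)),
    ← Nat.cast_sum, sum_multiBinomial_bidegreeExponents hγ, Nat.cast_mul]

theorem gramPoly_binomialGram {k₁ k₂ : ℕ} {f : MvPolynomial (Fin n ⊕ Fin m) ℝ}
    (hf : f ∈ Biform n m (2 * k₁) (2 * k₂)) :
    gramPoly _ (binomialGram f (bidegreeExponents n m k₁ k₂)) =
      ((2 * k₁).choose k₁ * (2 * k₂).choose k₂ : ℝ) • f := by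
  classical
  ext γ
  have hterm : ∀ α β : bidegreeExponents n m k₁ k₂,
      (if (α + β : Fin n ⊕ Fin m →₀ ℕ) = γ then binomialGram f _ α β else 0) =
        coeff γ f * if (α + β : Fin n ⊕ Fin m →₀ ℕ) = γ then (multiBinomial γ α : ℝ) else 0 := by
    intro α β
    split_ifs with h
    · subst h; rfl
    · rw [mul_zero]
  simp only [coeff_gramPoly, hterm, ← mul_sum, coeff_smul, smul_eq_mul]
  by_cases hγ : Finsupp.weight (bw n m) γ = (2 * k₁, 2 * k₂)
  · rw [sum_sum_ite_add_eq_multiBinomial hγ, mul_comm]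
  · rw [IsWeightedHomogeneous.coeff_eq_zero hf γ hγ, zero_mul, mul_zero]

theorem sum_sq_mem_sqSet {k₁ k₂ : ℕ} {ι : Type*} [Fintype ι]
    {g : ι → MvPolynomial (Fin n ⊕ Fin m) ℝ} (hg : ∀ i, g i ∈ Biform n m k₁ k₂) :
    ∑ i, g i ^ 2 ∈ SqSet n m k₁ k₂ :=
  ⟨_, g ∘ (Fintype.equivFin ι).symm, fun _ => hg _,
    (Equiv.sum_comp (Fintype.equivFin ι).symm (fun i => g i ^ 2)).symm⟩

theorem sq_mem_sqSet {k₁ k₂ : ℕ} {g : MvPolynomial (Fin n ⊕ Fin m) ℝ}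
    (hg : g ∈ Biform n m k₁ k₂) : g ^ 2 ∈ SqSet n m k₁ k₂ := by
  simpa using sum_sq_mem_sqSet (g := fun _ : Unit => g) fun _ => hg

end Bidegree

end BiformPaper

open BiformPaper in
theorem statement12_general (n m k₁ k₂ : ℕ) :
    {f | f ∈ Biform n m (2 * k₁) (2 * k₂) ∧ ∀ g ∈ SqSet n m k₁ k₂, 0 ≤ apolar f g} ⊆
      SqSet n m k₁ k₂ := by
  rintro f ⟨hf, hdual⟩
  set S := bidegreeExponents n m k₁ k₂
  set c : ℝ := (2 * k₁).choose k₁ * (2 * k₂).choose k₂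
  have hc : 0 < c := by
    have := Nat.choose_pos (Nat.le_mul_of_pos_left k₁ two_pos)
    have := Nat.choose_pos (Nat.le_mul_of_pos_left k₂ two_pos)
    positivity
  have hG : (c⁻¹ • binomialGram f S).PosSemidef :=
    (posSemidef_binomialGram f S fun v => hdual _ (sq_mem_sqSet (sumMonomials_mem_biform v))).smul
      (inv_nonneg.mpr hc.le)
  obtain ⟨B, hB⟩ := exists_gramPoly_eq_sum_sq S hG
  have hf_gram : f = gramPoly S (c⁻¹ • binomialGram f S) := by
    rw [gramPoly_smul, gramPoly_binomialGram hf, smul_smul, inv_mul_cancel₀ hc.ne', one_smul]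
  rw [hf_gram, hB]
  exact sum_sq_mem_sqSet fun e => sumMonomials_mem_biform (B e)

open BiformPaper in
/-- **Lemma (the apolar dual of the sums of squares cone is contained in it).**
For all positive integers `n, m, k₁, k₂`:
`{f ∈ ℝ[x,y]_{2k₁,2k₂} : ⟨f, g⟩_d ≥ 0 for all g ∈ Sq} ⊆ Sq`. -/
theorem statement12 (n m k₁ k₂ : ℕ) (hn : 0 < n) (hm : 0 < m) (hk₁ : 0 < k₁) (hk₂ : 0 < k₂) :
    {f | f ∈ Biform n m (2 * k₁) (2 * k₂) ∧ ∀ g ∈ SqSet n m k₁ k₂, 0 ≤ apolar f g} ⊆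
      SqSet n m k₁ k₂ :=
  statement12_general n m k₁ k₂
end
end
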